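/- Let {A_i} be n_i×n_i real matrices sharing a common eigenvalue s_0 with Re(s_0) ≥ 0, each A_i having s_0 as a simple eigenvalue, and let B_i ∈ ℝ^{n_i×1}. If A − B M F is Hurwitz for some F, where A = diag(A_1,…,A_N), B = diag(B_1,…,B_N), and M ∈ ℝ^{N×N}, then M is nonsingular. -/
import Mathlib


open Matrix

/-- All eigenvalues (over ℂ) have negative real part. -/
def Hurwitz {n : Type*} [Fintype n] [DecidableEq n] (M : Matrix n n ℝ) : Prop :=
  ∀ μ ∈ spectrum ℂ (M.map Complex.ofReal), μ.re < 0

private lemma matMapMul {l m o : Type*} [Fintype m] (X : Matrix l m ℝ) (Y : Matrix m o ℝ) :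
    (X * Y).map Complex.ofReal = X.map Complex.ofReal * Y.map Complex.ofReal :=
  Matrix.map_mul (f := Complex.ofRealHom)

private lemma vecMulSmulOne {m : Type*} [Fintype m] [DecidableEq m] (v : m → ℂ) (s : ℂ) :
    v ᵥ* (s • (1 : Matrix m m ℂ)) = s • v := by
  funext j
  simp [Matrix.vecMul, dotProduct, Matrix.one_apply, mul_ite, mul_comm]

private lemma mem_spectrum_of_vecMul' {m : Type*} [Fintype m] [DecidableEq m]
    (T : Matrix m m ℂ) {s : ℂ} {v : m → ℂ} (hv : v ≠ 0) (h : v ᵥ* T = s • v) :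
    s ∈ spectrum ℂ T := by
  rw [spectrum.mem_iff, Matrix.isUnit_iff_isUnit_det, isUnit_iff_ne_zero, not_not,
    ← Matrix.exists_vecMul_eq_zero_iff]
  refine ⟨v, hv, ?_⟩
  rw [Algebra.algebraMap_eq_smul_one, Matrix.vecMul_sub, vecMulSmulOne, h, sub_self]

private lemma exists_left_eig' {m : Type*} [Fintype m] [DecidableEq m]
    (T : Matrix m m ℂ) {s : ℂ} (hs : s ∈ spectrum ℂ T) :
    ∃ v, v ≠ 0 ∧ v ᵥ* T = s • v := by
  rw [spectrum.mem_iff] at hs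
  have hdet : (algebraMap ℂ (Matrix m m ℂ) s - T).det = 0 := by
    by_contra hd
    exact hs ((Matrix.isUnit_iff_isUnit_det _).mpr (isUnit_iff_ne_zero.mpr hd))
  obtain ⟨v, hv, hvT⟩ := Matrix.exists_vecMul_eq_zero_iff.mpr hdet
  refine ⟨v, hv, ?_⟩
  rw [Algebra.algebraMap_eq_smul_one, Matrix.vecMul_sub, vecMulSmulOne, sub_eq_zero] at hvT
  exact hvT.symm

/-- Single-input heterogeneous agents A_i sharing a common simple
eigenvalue s₀ with Re(s₀) ≥ 0. If A − BMF is Hurwitz for some F, where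
A = diag(A_1,…,A_N) and B = diag(B_1,…,B_N) (B_i column vectors), then M is
nonsingular. -/
theorem stmt12 {N : ℕ} (n : Fin N → ℕ)
    (A : ∀ i, Matrix (Fin (n i)) (Fin (n i)) ℝ)
    (B : ∀ i, Fin (n i) → ℝ)
    (s0 : ℂ) (hs0 : 0 ≤ s0.re)
    (heig : ∀ i, s0 ∈ spectrum ℂ ((A i).map Complex.ofReal))
    (hsimple : ∀ i,
      Polynomial.rootMultiplicity s0 (((A i).map Complex.ofReal).charpoly) = 1)
    (M : Matrix (Fin N) (Fin N) ℝ)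
    (F : Matrix (Fin N) ((i : Fin N) × Fin (n i)) ℝ)
    (Bmat : Matrix ((i : Fin N) × Fin (n i)) (Fin N) ℝ)
    (hB : ∀ p j, Bmat p j = if p.1 = j then B p.1 p.2 else 0)
    (hH : Hurwitz (Matrix.blockDiagonal' A - Bmat * M * F)) :
    IsUnit M := by
  by_contra hM
  set Ac : ∀ i, Matrix (Fin (n i)) (Fin (n i)) ℂ :=
    fun i => (A i).map Complex.ofReal with hAc
  set Bc : Matrix ((i : Fin N) × Fin (n i)) (Fin N) ℂ := Bmat.map Complex.ofReal with hBc
  set Mc : Matrix (Fin N) (Fin N) ℂ := M.map Complex.ofReal with hMc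
  set Fc : Matrix (Fin N) ((i : Fin N) × Fin (n i)) ℂ := F.map Complex.ofReal with hFc
  -- complexified closed-loop matrix
  have hTc : (Matrix.blockDiagonal' A - Bmat * M * F).map Complex.ofReal
      = Matrix.blockDiagonal' Ac - Bc * Mc * Fc := by
    have h1 : (Matrix.blockDiagonal' A - Bmat * M * F).map Complex.ofReal
        = (Matrix.blockDiagonal' A).map Complex.ofReal
          - (Bmat * M * F).map Complex.ofReal := by
      ext p q; simp [Matrix.map_apply]
    rw [h1, Matrix.blockDiagonal'_map A Complex.ofReal (by simp), matMapMul, matMapMul]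
  -- left eigenvectors of each block
  have h1 : ∀ i, ∃ w, w ≠ 0 ∧ w ᵥ* Ac i = s0 • w := fun i => exists_left_eig' (Ac i) (heig i)
  choose w hw0 hwA using h1
  set c : Fin N → ℂ := fun i => ∑ k, w i k * (B i k : ℂ) with hc
  -- key vecMul computations for vectors of the form p ↦ z p.1 * w p.1 p.2
  have hvA : ∀ z : Fin N → ℂ,
      (fun p : (i : Fin N) × Fin (n i) => z p.1 * w p.1 p.2) ᵥ* Matrix.blockDiagonal' Ac
        = s0 • fun p : (i : Fin N) × Fin (n i) => z p.1 * w p.1 p.2 := by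
    intro z
    funext q
    obtain ⟨j, l⟩ := q
    have hsum : ((fun p : (i : Fin N) × Fin (n i) => z p.1 * w p.1 p.2)
        ᵥ* Matrix.blockDiagonal' Ac) ⟨j, l⟩
        = ∑ i, ∑ k, z i * w i k * Matrix.blockDiagonal' Ac ⟨i, k⟩ ⟨j, l⟩ := by
      simp only [Matrix.vecMul, dotProduct]
      rw [← Finset.univ_sigma_univ, Finset.sum_sigma]
    rw [hsum, Finset.sum_eq_single j]
    · have hw'' := congrFun (hwA j) l
      simp only [Matrix.vecMul, dotProduct, Pi.smul_apply, smul_eq_mul] at hw''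
      simp only [Matrix.blockDiagonal'_apply_eq, Pi.smul_apply, smul_eq_mul]
      calc ∑ k, z j * w j k * Ac j k l
          = z j * ∑ k, w j k * Ac j k l := by
            rw [Finset.mul_sum]; exact Finset.sum_congr rfl fun k _ => by ring
        _ = z j * (s0 * w j l) := by rw [hw'']
        _ = s0 * (z j * w j l) := by ring
    · intro i _ hij
      apply Finset.sum_eq_zero
      intro k _
      rw [Matrix.blockDiagonal'_apply_ne _ _ _ hij, mul_zero]
    · intro h; exact absurd (Finset.mem_univ j) h
  have hvB : ∀ z : Fin N → ℂ,
      (fun p : (i : Fin N) × Fin (n i) => z p.1 * w p.1 p.2) ᵥ* Bc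
        = fun j => z j * c j := by
    intro z
    funext j
    have hsum : ((fun p : (i : Fin N) × Fin (n i) => z p.1 * w p.1 p.2) ᵥ* Bc) j
        = ∑ i, ∑ k, z i * w i k * Bc ⟨i, k⟩ j := by
      simp only [Matrix.vecMul, dotProduct]
      rw [← Finset.univ_sigma_univ, Finset.sum_sigma]
    rw [hsum, Finset.sum_eq_single j]
    · calc ∑ k, z j * w j k * Bc ⟨j, k⟩ j
          = z j * ∑ k, w j k * (B j k : ℂ) := by
            rw [Finset.mul_sum]
            refine Finset.sum_congr rfl fun k _ => ?_
            have hbe : Bc ⟨j, k⟩ j = (B j k : ℂ) := by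
              simp [hBc, Matrix.map_apply, hB]
            rw [hbe]; ring
        _ = z j * c j := rfl
    · intro i _ hij
      apply Finset.sum_eq_zero
      intro k _
      rw [hBc, Matrix.map_apply, hB]
      simp [hij]
    · intro h; exact absurd (Finset.mem_univ j) h
  -- the key contradiction machine
  have key : ∀ z : Fin N → ℂ,
      (∃ p : (i : Fin N) × Fin (n i), z p.1 * w p.1 p.2 ≠ 0) →
      ((fun j => z j * c j) ᵥ* Mc = 0) → False := by
    intro z ⟨p, hp⟩ hzc
    set v : ((i : Fin N) × Fin (n i)) → ℂ := fun p => z p.1 * w p.1 p.2 with hv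
    have hvne : v ≠ 0 := fun h => hp (congrFun h p)
    have hvBM0 : (v ᵥ* Bc) ᵥ* Mc = 0 := by
      rw [hvB z]; exact hzc
    have hvT : v ᵥ* ((Matrix.blockDiagonal' A - Bmat * M * F).map Complex.ofReal) = s0 • v := by
      rw [hTc, Matrix.vecMul_sub, hvA z, ← Matrix.vecMul_vecMul, ← Matrix.vecMul_vecMul,
        hvBM0, Matrix.zero_vecMul, sub_zero]
    have hmem := mem_spectrum_of_vecMul' _ hvne hvT
    have := hH s0 hmem
    linarith
  -- each c i is nonzero
  have hcne : ∀ i, c i ≠ 0 := by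
    intro i hci
    obtain ⟨k, hk⟩ := Function.ne_iff.mp (hw0 i)
    apply key (Pi.single i 1)
    · exact ⟨⟨i, k⟩, by simpa using hk⟩
    · have h0 : (fun j => (Pi.single i 1 : Fin N → ℂ) j * c j) = 0 := by
        funext j
        by_cases hji : j = i
        · subst hji; rw [hci, mul_zero]; rfl
        · simp [Pi.single_eq_of_ne hji]
      rw [h0, Matrix.zero_vecMul]
  -- M singular gives a left null vector
  have hdetM : M.det = 0 := by
    by_contra hd
    exact hM ((Matrix.isUnit_iff_isUnit_det _).mpr (isUnit_iff_ne_zero.mpr hd))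
  have hdetMc : Mc.det = 0 := by
    rw [hMc]
    have : (M.map Complex.ofReal).det = Complex.ofRealHom M.det :=
      (RingHom.map_det Complex.ofRealHom M).symm
    rw [this, hdetM]
    simp
  obtain ⟨y, hy, hyM⟩ := Matrix.exists_vecMul_eq_zero_iff.mpr hdetMc
  set z : Fin N → ℂ := fun j => y j / c j with hz
  have hzc : ∀ j, z j * c j = y j := fun j => div_mul_cancel₀ (y j) (hcne j)
  obtain ⟨j, hj⟩ := Function.ne_iff.mp hy
  obtain ⟨k, hk⟩ := Function.ne_iff.mp (hw0 j)
  apply key z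
  · refine ⟨⟨j, k⟩, ?_⟩
    simp only [hz]
    exact mul_ne_zero (div_ne_zero hj (hcne j)) hk
  · have hy' : (fun j => z j * c j) = y := funext hzc
    rw [hy']
    exact hyM
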